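/- Fix uniform bids b_{ij} = α_i v_{ij} with multipliers α_i ≥ 1 and an allocation a valid under b, and let a^opt be the optimal allocation obtained by ranking all items in descending order of true value v_{ij}, breaking ties in favor of the item appearing earlier in a. Then for every k ∈ [K], the sum of the GSP per-click prices of the top k slots covers the value of the displaced optimal items: Σ_{t=1}^{k} τ_{a(t)}(a, b) ≥ Σ_{(i,j) ∈ S_k(a^opt) \ S_k(a)} v_{ij}. -/

import Mathlib

open Finset MeasureTheory

namespace SponsoredShopping

noncomputable section

/-- An item is a pair `(i, j)`: bidder `i`'s `j`-th item. -/
abbrev Item (n m : ℕ) : Type := Fin n × Fin m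

/-- An allocation assigns to each rank `k` (0-based) an item. -/
abbrev Alloc (n m : ℕ) : Type := Fin (n * m) ≃ Item n m

/-- Maximum of `f` over a finite set, with value `0` on the empty set. -/
def fmax {ι : Type*} (s : Finset ι) (f : ι → ℝ) : ℝ :=
  WithBot.unbotD 0 (s.sup fun i => (f i : WithBot ℝ))

variable {n m : ℕ}

/-- An allocation is valid under bids `b` if bids are nonincreasing along ranks. -/
def ValidUnder (b : Item n m → ℝ) (a : Alloc n m) : Prop :=
  ∀ k k' : Fin (n * m), k ≤ k' → b (a k') ≤ b (a k)

/-- The value of bidder `i` under allocation `a`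
(`c k` is the CTR of slot `k`, with `c k = 0` for `k ≥ K`). -/
def bidderValue (c : ℕ → ℝ) (v : Item n m → ℝ) (a : Alloc n m) (i : Fin n) : ℝ :=
  ∑ k : Fin (n * m), if (a k).1 = i then c k * v (a k) else 0

/-- Social welfare of an allocation. -/
def wel (c : ℕ → ℝ) (v : Item n m → ℝ) (a : Alloc n m) : ℝ :=
  ∑ k : Fin (n * m), c k * v (a k)

/-- Optimal social welfare. -/
def welOpt (c : ℕ → ℝ) (v : Item n m → ℝ) : ℝ :=
  fmax (univ : Finset (Alloc n m)) (wel c v)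

/-- GSP per-click price of the item ranked `k`: highest bid among lower-ranked
items belonging to other bidders (`0` if none). -/
def gspPrice (b : Item n m → ℝ) (a : Alloc n m) (k : Fin (n * m)) : ℝ :=
  fmax (univ.filter fun k' : Fin (n * m) => k < k' ∧ (a k').1 ≠ (a k).1)
    (fun k' => b (a k'))

/-- Total GSP payment of bidder `i`. -/
def gspPay (c : ℕ → ℝ) (b : Item n m → ℝ) (a : Alloc n m) (i : Fin n) : ℝ :=
  ∑ k : Fin (n * m), if (a k).1 = i then c k * gspPrice b a k else 0

/-- Bid-welfare of an allocation. -/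
def bidWelfare (c : ℕ → ℝ) (b : Item n m → ℝ) (a : Alloc n m) : ℝ :=
  ∑ k : Fin (n * m), c k * b (a k)

/-- Bids with bidder `i`'s bids zeroed out. -/
def exclBids (b : Item n m → ℝ) (i : Fin n) : Item n m → ℝ :=
  fun x => if x.1 = i then 0 else b x

/-- Bid-welfare obtained by bidders other than `i` in allocation `a`. -/
def othersWelfare (c : ℕ → ℝ) (b : Item n m → ℝ) (a : Alloc n m) (i : Fin n) : ℝ :=
  ∑ k : Fin (n * m), if (a k).1 ≠ i then c k * b (a k) else 0

/-- Optimal counterfactual bid-welfare without bidder `i`. -/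
def woptWithout (c : ℕ → ℝ) (b : Item n m → ℝ) (i : Fin n) : ℝ :=
  fmax (univ : Finset (Alloc n m)) (fun a' => bidWelfare c (exclBids b i) a')

/-- VCG payment of bidder `i`. -/
def vcgPay (c : ℕ → ℝ) (b : Item n m → ℝ) (a : Alloc n m) (i : Fin n) : ℝ :=
  woptWithout c b i - othersWelfare c b a i

/-- The two mechanisms considered. -/
inductive Mech | gsp | vcg

/-- Payment of bidder `i` under mechanism `M`. -/
def pay : Mech → (ℕ → ℝ) → (Item n m → ℝ) → Alloc n m → Fin n → ℝ
  | .gsp => gspPay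
  | .vcg => vcgPay

/-- `S_k(a)`: the set of items assigned to the first `k` slots in `a`. -/
def topk (a : Alloc n m) (k : ℕ) : Finset (Item n m) :=
  (univ.filter fun r : Fin (n * m) => (r : ℕ) < k).image a

/- Let `D = S_k(a^opt) \ S_k(a)` be the displaced optimal items and
`E = S_k(a) \ S_k(a^opt)` the items that took their places; `|D| = |E|` because both prefixes
have the same size. Every `x ∈ D` sits below every `y ∈ E` in `a` but above it in `a^opt`. Such
`x` and `y` cannot belong to the same bidder: uniform bids would force `v x ≤ v y`, sortedness
`v y ≤ v x`, and the tie-breaking rule would then put `x` above `y` in `a`. So `x` is a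
lower-ranked competitor of `y`, and the GSP price of `y` is at least `b x ≥ v x`. As every
value in `D` is below every price in `E`, the displaced value is at most the total price of `E`. -/

lemma le_fmax {ι : Type*} {s : Finset ι} (f : ι → ℝ) {i : ι} (hi : i ∈ s) :
    f i ≤ fmax s f := by
  have h : (f i : WithBot ℝ) ≤ s.sup fun i => (f i : WithBot ℝ) :=
    Finset.le_sup (f := fun i => (f i : WithBot ℝ)) hi
  unfold fmax
  cases hs : s.sup fun i => (f i : WithBot ℝ) with
  | bot => simp [hs] at h
  | coe z => rw [hs] at h; exact WithBot.coe_le_coe.mp h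

lemma fmax_nonneg {ι : Type*} {s : Finset ι} {f : ι → ℝ} (h : ∀ i ∈ s, 0 ≤ f i) :
    0 ≤ fmax s f := by
  rcases s.eq_empty_or_nonempty with rfl | hne
  · simp [fmax]
  · obtain ⟨i, hi, hmax⟩ := s.exists_max_image f hne
    have hsup : (s.sup fun i => (f i : WithBot ℝ)) = (f i : WithBot ℝ) :=
      le_antisymm (Finset.sup_le fun j hj => WithBot.coe_le_coe.mpr (hmax j hj))
        (Finset.le_sup (f := fun i => (f i : WithBot ℝ)) hi)
    simpa [fmax, hsup] using h i hi

lemma sum_le_sum_of_card_eq_of_forall_le {ι κ M : Type*} [AddCommMonoid M]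
    [LinearOrder M] [IsOrderedAddMonoid M] {s : Finset ι} {t : Finset κ} {f : ι → M}
    {g : κ → M} (hcard : #s = #t) (h : ∀ x ∈ s, ∀ y ∈ t, f x ≤ g y) :
    ∑ x ∈ s, f x ≤ ∑ y ∈ t, g y := by
  rcases s.eq_empty_or_nonempty with rfl | hne
  · rw [card_empty, eq_comm, card_eq_zero] at hcard
    simp [hcard]
  obtain ⟨x₀, hx₀, hmax⟩ := s.exists_max_image f hne
  calc ∑ x ∈ s, f x ≤ #s • f x₀ := s.sum_le_card_nsmul f _ hmax
    _ = #t • f x₀ := by rw [hcard]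
    _ ≤ ∑ y ∈ t, g y := t.card_nsmul_le_sum g _ (h x₀ hx₀)

lemma le_gspPrice {b : Item n m → ℝ} {a : Alloc n m} {t r : Fin (n * m)} (htr : t < r)
    (hne : (a r).1 ≠ (a t).1) : b (a r) ≤ gspPrice b a t :=
  le_fmax (fun k' => b (a k')) (by simp [htr, hne])

lemma gspPrice_nonneg {b : Item n m → ℝ} (hb : ∀ x, 0 ≤ b x) (a : Alloc n m)
    (t : Fin (n * m)) : 0 ≤ gspPrice b a t :=
  fmax_nonneg fun _ _ => hb _

lemma mem_topk {a : Alloc n m} {k : ℕ} {x : Item n m} :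
    x ∈ topk a k ↔ (a.symm x : ℕ) < k := by
  simp only [topk, mem_image, mem_filter, mem_univ, true_and]
  constructor
  · rintro ⟨r, hr, rfl⟩
    simpa using hr
  · exact fun h => ⟨a.symm x, h, a.apply_symm_apply x⟩

lemma card_topk (a : Alloc n m) (k : ℕ) :
    #(topk a k) = #(univ.filter fun r : Fin (n * m) => (r : ℕ) < k) :=
  card_image_of_injective _ a.injective

lemma sum_topk (a : Alloc n m) (k : ℕ) (g : Fin (n * m) → ℝ) :
    ∑ y ∈ topk a k, g (a.symm y) = ∑ t : Fin (n * m), if (t : ℕ) < k then g t else 0 := by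
  rw [topk, sum_image fun _ _ _ _ h => a.injective h, ← sum_filter]
  simp

lemma bidder_ne_of_overtaken {v : Item n m → ℝ} {α : Fin n → ℝ} (hα : ∀ i, 0 < α i)
    {a aopt : Alloc n m} (ha : ValidUnder (fun x => α x.1 * v x) a)
    (hsort : ∀ r r' : Fin (n * m), r ≤ r' → v (aopt r') ≤ v (aopt r))
    (htie : ∀ x y : Item n m, v x = v y → (aopt.symm x ≤ aopt.symm y ↔ a.symm x ≤ a.symm y))
    {x y : Item n m} (hxy : aopt.symm x ≤ aopt.symm y) (hyx : a.symm y < a.symm x) :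
    x.1 ≠ y.1 := by
  intro hbidder
  have hbid : α x.1 * v x ≤ α x.1 * v y := by
    simpa [hbidder] using ha _ _ hyx.le
  have hvx : v x ≤ v y := le_of_mul_le_mul_left hbid (hα x.1)
  have hvy : v y ≤ v x := by simpa using hsort _ _ hxy
  exact absurd ((htie x y (le_antisymm hvx hvy)).mp hxy) (not_le.mpr hyx)

lemma value_le_gspPrice_of_displaced {v : Item n m → ℝ} (hv : ∀ x, 0 ≤ v x) {α : Fin n → ℝ}
    (hα : ∀ i, 1 ≤ α i) {a aopt : Alloc n m} (ha : ValidUnder (fun x => α x.1 * v x) a)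
    (hsort : ∀ r r' : Fin (n * m), r ≤ r' → v (aopt r') ≤ v (aopt r))
    (htie : ∀ x y : Item n m, v x = v y → (aopt.symm x ≤ aopt.symm y ↔ a.symm x ≤ a.symm y))
    {k : ℕ} {x y : Item n m} (hx : x ∈ topk aopt k \ topk a k)
    (hy : y ∈ topk a k \ topk aopt k) :
    v x ≤ gspPrice (fun x => α x.1 * v x) a (a.symm y) := by
  simp only [mem_sdiff, mem_topk, not_lt] at hx hy
  have hyx : a.symm y < a.symm x := Fin.lt_def.mpr (by omega)
  have hxy : aopt.symm x ≤ aopt.symm y := Fin.le_def.mpr (by omega)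
  have hne : (a (a.symm x)).1 ≠ (a (a.symm y)).1 := by
    simpa using bidder_ne_of_overtaken (fun i => one_pos.trans_le (hα i)) ha hsort htie hxy hyx
  calc v x ≤ α x.1 * v x := le_mul_of_one_le_left (hv x) (hα x.1)
    _ = α (a (a.symm x)).1 * v (a (a.symm x)) := by simp
    _ ≤ _ := le_gspPrice (b := fun x => α x.1 * v x) hyx hne

theorem gsp_prefix_prices_cover_displaced_value_general
    (n m K : ℕ) (v : Item n m → ℝ)
    (hv : ∀ x : Item n m, 0 ≤ v x)
    (α : Fin n → ℝ) (hα : ∀ i, 1 ≤ α i)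
    (a : Alloc n m) (ha : ValidUnder (fun x => α x.1 * v x) a)
    (aopt : Alloc n m)
    (hsort : ∀ r r' : Fin (n * m), r ≤ r' → v (aopt r') ≤ v (aopt r))
    (htie : ∀ x y : Item n m, v x = v y →
      (aopt.symm x ≤ aopt.symm y ↔ a.symm x ≤ a.symm y)) :
    ∀ k : ℕ, k ≤ K →
      ∑ x ∈ topk aopt k \ topk a k, v x
        ≤ ∑ t : Fin (n * m),
            if (t : ℕ) < k then gspPrice (fun x => α x.1 * v x) a t else 0 := by
  intro k _
  set b : Item n m → ℝ := fun x => α x.1 * v x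
  have hcard : #(topk aopt k \ topk a k) = #(topk a k \ topk aopt k) :=
    card_sdiff_comm (by rw [card_topk, card_topk])
  calc ∑ x ∈ topk aopt k \ topk a k, v x
      ≤ ∑ y ∈ topk a k \ topk aopt k, gspPrice b a (a.symm y) :=
        sum_le_sum_of_card_eq_of_forall_le hcard fun x hx y hy =>
          value_le_gspPrice_of_displaced hv hα ha hsort htie hx hy
    _ ≤ ∑ y ∈ topk a k, gspPrice b a (a.symm y) :=
        sum_le_sum_of_subset_of_nonneg sdiff_subset fun _ _ _ =>
          gspPrice_nonneg (fun x => mul_nonneg (zero_le_one.trans (hα x.1)) (hv x)) a _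
    _ = _ := sum_topk a k _

/-- The cumulative GSP per-click prices of the top `k` slots cover the value of
the displaced optimal items. -/
theorem gsp_prefix_prices_cover_displaced_value
    (n m K : ℕ) (v : Item n m → ℝ)
    (hv : ∀ x : Item n m, 0 ≤ v x)
    (hvmono : ∀ (i : Fin n) (j j' : Fin m), j ≤ j' → v (i, j') ≤ v (i, j))
    (α : Fin n → ℝ) (hα : ∀ i, 1 ≤ α i)
    (a : Alloc n m) (ha : ValidUnder (fun x => α x.1 * v x) a)
    (aopt : Alloc n m)
    (hsort : ∀ r r' : Fin (n * m), r ≤ r' → v (aopt r') ≤ v (aopt r))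
    (htie : ∀ x y : Item n m, v x = v y →
      (aopt.symm x ≤ aopt.symm y ↔ a.symm x ≤ a.symm y)) :
    ∀ k : ℕ, k ≤ K →
      ∑ x ∈ topk aopt k \ topk a k, v x
        ≤ ∑ t : Fin (n * m),
            if (t : ℕ) < k then gspPrice (fun x => α x.1 * v x) a t else 0 :=
  gsp_prefix_prices_cover_displaced_value_general n m K v hv α hα a ha aopt hsort htie

end
end SponsoredShopping
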